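/- Let Ω ⊂ ℝⁿ be a convex set and ρ a metric on Ω such that every Euclidean line segment in Ω is a geodesic of (Ω,ρ). Fix ε > 0 and set c_ε(x,y) := ρ(x,y) + ε|x−y|². Let π be a finite Borel measure on Ω² concentrated on a c_ε-cyclically monotone set, whose second marginal has finite support and whose first marginal is absolutely continuous with respect to ℒⁿ. Then for every t ∈ [0,1), the interpolated measure (P_t)♯π is absolutely continuous with respect to ℒⁿ; moreover, if the density f of the first marginal is essentially bounded, then the density of (P_t)♯π is essentially bounded with ‖d(P_t)♯π/dℒⁿ‖_{L∞} ≤ (1−t)^{−n}‖f‖_{L∞}. -/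

import Mathlib

open MeasureTheory Set Metric Filter Topology ENNReal NNReal

noncomputable section

/-- `n`-dimensional Euclidean space. -/
abbrev Eucl (n : ℕ) := EuclideanSpace ℝ (Fin n)

/-- `ρ` is a metric on the set `Ω`. -/
def IsMetricOn {n : ℕ} (Ω : Set (Eucl n)) (ρ : Eucl n → Eucl n → ℝ) : Prop :=
  (∀ x ∈ Ω, ∀ y ∈ Ω, 0 ≤ ρ x y) ∧
  (∀ x ∈ Ω, ∀ y ∈ Ω, (ρ x y = 0 ↔ x = y)) ∧
  (∀ x ∈ Ω, ∀ y ∈ Ω, ρ x y = ρ y x) ∧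
  (∀ x ∈ Ω, ∀ y ∈ Ω, ∀ z ∈ Ω, ρ x z ≤ ρ x y + ρ y z)

/-- Every Euclidean line segment in `Ω` is a geodesic of `(Ω, ρ)`. -/
def SegmentsAreGeodesics {n : ℕ} (Ω : Set (Eucl n)) (ρ : Eucl n → Eucl n → ℝ) : Prop :=
  ∀ x ∈ Ω, ∀ y ∈ Ω, ∀ s ∈ Icc (0:ℝ) 1, ∀ t ∈ Icc (0:ℝ) 1,
    ρ ((1-s) • x + s • y) ((1-t) • x + t • y) = |t - s| * ρ x y

/-- The ball of `(Ω, ρ)` centred at `x` with radius `r`. -/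
def rhoBall {n : ℕ} (Ω : Set (Eucl n)) (ρ : Eucl n → Eucl n → ℝ) (x : Eucl n) (r : ℝ) :
    Set (Eucl n) :=
  {y ∈ Ω | ρ x y < r}

/-- The Lebesgue measure is locally doubling on `(Ω, ρ)`. -/
def LocallyDoubling {n : ℕ} (Ω : Set (Eucl n)) (ρ : Eucl n → Eucl n → ℝ) : Prop :=
  ∀ R > 0, ∃ C : ℝ, 1 ≤ C ∧ ∀ x ∈ Ω, ∀ r : ℝ, 0 < r → r ≤ R →
    volume (rhoBall Ω ρ x (2*r)) ≤ ENNReal.ofReal C * volume (rhoBall Ω ρ x r)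

/-- Assumption A of the paper: (i) the topology of `ρ` on `Ω` is the Euclidean one,
(ii) Euclidean segments are geodesics, (iii) Lebesgue measure is locally doubling. -/
def AssumptionA {n : ℕ} (Ω : Set (Eucl n)) (ρ : Eucl n → Eucl n → ℝ) : Prop :=
  (∀ x ∈ Ω, ∀ ε > 0, ∃ δ > 0, ∀ y ∈ Ω, dist x y < δ → ρ x y < ε) ∧
  (∀ x ∈ Ω, ∀ ε > 0, ∃ δ > 0, ∀ y ∈ Ω, ρ x y < δ → dist x y < ε) ∧
  SegmentsAreGeodesics Ω ρ ∧
  LocallyDoubling Ω ρ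

/-- The (topological) support of a Borel measure: points all of whose neighbourhoods have
positive measure. -/
def msupport {α : Type*} [TopologicalSpace α] [MeasurableSpace α] (μ : Measure α) : Set α :=
  {x | ∀ U ∈ nhds x, μ U ≠ 0}

/-- A set `Γ` is `c`-cyclically monotone for a real-valued cost `c`. -/
def CyclicallyMonotoneR {α : Type*} (c : α → α → ℝ) (Γ : Set (α × α)) : Prop :=
  ∀ (m : ℕ) (p : Fin (m+1) → α × α), (∀ i, p i ∈ Γ) →
    ∑ i, c (p i).1 (p i).2 ≤ ∑ i, c (p i).1 (p (i+1)).2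

/-- The interpolation map `P_t(x, y) = (1-t) x + t y`. -/
def interpMap {n : ℕ} (t : ℝ) : Eucl n × Eucl n → Eucl n :=
  fun p => (1-t) • p.1 + t • p.2

/-!
For `0 < t < 1` the map `P_t` is injective on `Γ`. Indeed, if the segments `[x₁, y₁]` and
`[x₂, y₂]` meet at time `t`, the triangle inequality through the common point and the geodesic
property give `ρ(x₁,y₂) + ρ(x₂,y₁) ≤ ρ(x₁,y₁) + ρ(x₂,y₂)`, so two-point `c_ε`-monotonicity forces
the same inequality for the squared Euclidean distances; but for such segments
`|x₁-y₂|² + |x₂-y₁|²` falls short of `|x₁-y₁|² + |x₂-y₂|²` by `2t(1-t)|(x₁-y₁)-(x₂-y₂)|²`.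

Splitting `π` along the finitely many values `y` of its second coordinate, `(P_t)♯π` is a sum of
images of pieces of the first marginal under the homotheties `x ↦ (1-t)x + ty`, each of which
multiplies densities by `(1-t)^(-n)`. Injectivity of `P_t` makes these images disjoint, so the
densities do not add up.
-/

lemma CyclicallyMonotoneR.add_le_add_swap {α : Type*} {c : α → α → ℝ} {Γ : Set (α × α)}
    (hΓ : CyclicallyMonotoneR c Γ) {p q : α × α} (hp : p ∈ Γ) (hq : q ∈ Γ) :
    c p.1 p.2 + c q.1 q.2 ≤ c p.1 q.2 + c q.1 p.2 := by
  simpa [Fin.sum_univ_two] using hΓ 1 ![p, q] (Fin.forall_fin_two.mpr ⟨hp, hq⟩)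

lemma norm_sub_sq_add_norm_sub_sq_of_smul_add_eq {F : Type*} [NormedAddCommGroup F]
    [InnerProductSpace ℝ F] {t : ℝ} {x₁ y₁ x₂ y₂ : F}
    (h : (1 - t) • x₁ + t • y₁ = (1 - t) • x₂ + t • y₂) :
    ‖x₁ - y₂‖ ^ 2 + ‖x₂ - y₁‖ ^ 2 + 2 * t * (1 - t) * ‖(x₁ - y₁) - (x₂ - y₂)‖ ^ 2 =
      ‖x₁ - y₁‖ ^ 2 + ‖x₂ - y₂‖ ^ 2 := by
  have h₁₂ : x₁ - y₂ = t • (x₁ - y₁) + (1 - t) • (x₂ - y₂) := by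
    linear_combination (norm := module) h
  have h₂₁ : x₂ - y₁ = (1 - t) • (x₁ - y₁) + t • (x₂ - y₂) := by
    linear_combination (norm := module) -h
  rw [h₁₂, h₂₁]
  simp only [← real_inner_self_eq_norm_sq, inner_add_left, inner_add_right, inner_sub_left,
    inner_sub_right, real_inner_smul_left, real_inner_smul_right, real_inner_comm (x₁ - y₁)]
  ring

namespace SegmentsAreGeodesics

variable {n : ℕ} {Ω : Set (Eucl n)} {ρ : Eucl n → Eucl n → ℝ}

lemma apply_interp_left (hgeo : SegmentsAreGeodesics Ω ρ) {x y : Eucl n} (hx : x ∈ Ω)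
    (hy : y ∈ Ω) {t : ℝ} (ht : t ∈ Icc (0 : ℝ) 1) :
    ρ x ((1 - t) • x + t • y) = t * ρ x y := by
  simpa [abs_of_nonneg ht.1] using hgeo x hx y hy 0 (left_mem_Icc.mpr zero_le_one) t ht

lemma apply_interp_right (hgeo : SegmentsAreGeodesics Ω ρ) {x y : Eucl n} (hx : x ∈ Ω)
    (hy : y ∈ Ω) {t : ℝ} (ht : t ∈ Icc (0 : ℝ) 1) :
    ρ ((1 - t) • x + t • y) y = (1 - t) * ρ x y := by
  simpa [abs_of_nonneg (sub_nonneg.mpr ht.2)] using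
    hgeo x hx y hy t ht 1 (right_mem_Icc.mpr zero_le_one)

lemma cross_add_le (hgeo : SegmentsAreGeodesics Ω ρ) (hconv : Convex ℝ Ω)
    (hmet : IsMetricOn Ω ρ) {x₁ y₁ x₂ y₂ : Eucl n} (hx₁ : x₁ ∈ Ω) (hy₁ : y₁ ∈ Ω)
    (hx₂ : x₂ ∈ Ω) (hy₂ : y₂ ∈ Ω) {t : ℝ} (ht : t ∈ Icc (0 : ℝ) 1)
    (h : (1 - t) • x₁ + t • y₁ = (1 - t) • x₂ + t • y₂) :
    ρ x₁ y₂ + ρ x₂ y₁ ≤ ρ x₁ y₁ + ρ x₂ y₂ := by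
  have hz : (1 - t) • x₁ + t • y₁ ∈ Ω :=
    hconv hx₁ hy₁ (sub_nonneg.mpr ht.2) ht.1 (sub_add_cancel 1 t)
  have h₁₂ := hmet.2.2.2 x₁ hx₁ _ hz y₂ hy₂
  have h₂₁ := hmet.2.2.2 x₂ hx₂ _ hz y₁ hy₁
  rw [hgeo.apply_interp_left hx₁ hy₁ ht, h, hgeo.apply_interp_right hx₂ hy₂ ht] at h₁₂
  rw [h, hgeo.apply_interp_left hx₂ hy₂ ht, ← h, hgeo.apply_interp_right hx₁ hy₁ ht] at h₂₁
  linarith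

end SegmentsAreGeodesics

lemma injOn_interpMap {n : ℕ} {Ω : Set (Eucl n)} (hconv : Convex ℝ Ω)
    {ρ : Eucl n → Eucl n → ℝ} (hmet : IsMetricOn Ω ρ) (hgeo : SegmentsAreGeodesics Ω ρ)
    {ε : ℝ} (hε : 0 < ε) {Γ : Set (Eucl n × Eucl n)} (hΓΩ : Γ ⊆ Ω ×ˢ Ω)
    (hΓ : CyclicallyMonotoneR (fun x y => ρ x y + ε * ‖x - y‖ ^ 2) Γ)
    {t : ℝ} (ht₀ : 0 < t) (ht₁ : t < 1) : InjOn (interpMap t) Γ := by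
  rintro ⟨x₁, y₁⟩ hp ⟨x₂, y₂⟩ hq (h : (1 - t) • x₁ + t • y₁ = (1 - t) • x₂ + t • y₂)
  have hmono := hΓ.add_le_add_swap hp hq
  have hcross := hgeo.cross_add_le hconv hmet (hΓΩ hp).1 (hΓΩ hp).2 (hΓΩ hq).1 (hΓΩ hq).2
    ⟨ht₀.le, ht₁.le⟩ h
  have hid := norm_sub_sq_add_norm_sub_sq_of_smul_add_eq h
  have hdiff : ‖(x₁ - y₁) - (x₂ - y₂)‖ ^ 2 ≤ 0 := by
    have : 0 < ε * (2 * t * (1 - t)) := by have := sub_pos.mpr ht₁; positivity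
    simp only at hmono
    nlinarith
  have hd : x₁ - y₁ = x₂ - y₂ := sub_eq_zero.mp (by simpa using hdiff.antisymm (sq_nonneg _))
  have hx : x₁ = x₂ := by linear_combination (norm := module) h + t • hd
  have hy : y₁ = y₂ := by linear_combination (norm := module) hx - hd
  rw [hx, hy]

namespace MeasureTheory.Measure

variable {α : Type*} [MeasurableSpace α]

lemma le_essSup_rnDeriv_smul {μ ν : Measure α} [μ.HaveLebesgueDecomposition ν] [SFinite ν]
    (hμν : μ ≪ ν) : μ ≤ essSup (μ.rnDeriv ν) ν • ν := by
  refine le_iff'.mpr fun s => ?_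
  calc μ s = ∫⁻ x in s, μ.rnDeriv ν x ∂ν := (setLIntegral_rnDeriv hμν s).symm
    _ ≤ ∫⁻ _ in s, essSup (μ.rnDeriv ν) ν ∂ν :=
        lintegral_mono_ae (ae_restrict_of_ae (ENNReal.ae_le_essSup _))
    _ = (essSup (μ.rnDeriv ν) ν • ν) s := by rw [setLIntegral_const, smul_apply, smul_eq_mul]

lemma essSup_rnDeriv_le_of_le_smul {μ ν : Measure α} [SigmaFinite ν] {c : ℝ≥0∞}
    (h : μ ≤ c • ν) : essSup (μ.rnDeriv ν) ν ≤ c := by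
  refine essSup_le_of_ae_le _ <|
    ae_le_of_forall_setLIntegral_le_of_sigmaFinite (μ.measurable_rnDeriv ν) fun s _ _ => ?_
  rw [setLIntegral_const]
  exact (setLIntegral_rnDeriv_le s).trans (h s)

variable {β γ : Type*} [MeasurableSpace β] [MeasurableSpace γ]

lemma map_le_sum_map_restrict_sections {π : Measure (α × β)} {S : Set β} (hS : S.Countable)
    (hπS : ∀ᵐ p ∂π, p.2 ∈ S) {G : Set (α × β)} (hπG : ∀ᵐ p ∂π, p ∈ G) {f : α × β → γ}
    (hf : Measurable f) :
    π.map f ≤ sum fun y : S => ((π.map Prod.fst).restrict {x | (x, y.1) ∈ G}).map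
      fun x => f (x, y) := by
  refine le_iff.mpr fun E hE => ?_
  have hcover : f ⁻¹' E ∩ {p | p ∈ G ∧ p.2 ∈ S} ⊆
      ⋃ y ∈ S, Prod.fst ⁻¹' ((fun x => f (x, y)) ⁻¹' E ∩ {x | (x, y) ∈ G}) := by
    rintro ⟨x, y⟩ ⟨hE, hG, hy⟩
    exact mem_biUnion hy ⟨hE, hG⟩
  calc π.map f E = π (f ⁻¹' E ∩ {p | p ∈ G ∧ p.2 ∈ S}) := by
        rw [map_apply hf hE, measure_inter_conull (hπG.and hπS)]
    _ ≤ ∑' y : S, π (Prod.fst ⁻¹' ((fun x => f (x, y)) ⁻¹' E ∩ {x | (x, y.1) ∈ G})) :=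
        (measure_mono hcover).trans (measure_biUnion_le π hS _)
    _ ≤ ∑' y : S, π.map Prod.fst ((fun x => f (x, y)) ⁻¹' E ∩ {x | (x, y.1) ∈ G}) :=
        ENNReal.tsum_le_tsum fun y => le_map_apply measurable_fst.aemeasurable _
    _ = _ := by
        rw [sum_apply _ hE]
        refine tsum_congr fun y => ?_
        have hfy : Measurable fun x => f (x, y) := hf.comp measurable_prodMk_right
        rw [map_apply hfy hE, restrict_apply (hE.preimage hfy)]

end MeasureTheory.Measure

lemma Set.InjOn.pairwise_disjoint_image_sections {α β γ : Type*} {f : α × β → γ}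
    {G : Set (α × β)} (hf : InjOn f G) :
    Pairwise fun y y' => Disjoint ((fun x => f (x, y)) '' {x | (x, y) ∈ G})
      ((fun x => f (x, y')) '' {x | (x, y') ∈ G}) := by
  intro y y' hne
  refine disjoint_left.mpr ?_
  rintro _ ⟨x, hx, rfl⟩ ⟨x', hx', he⟩
  exact hne (congrArg Prod.snd (hf hx hx' he.symm))

section Homothety

open AffineMap Module

variable {E : Type*} [NormedAddCommGroup E] [NormedSpace ℝ E]

lemma continuous_homothety_swap (r : ℝ) :
    Continuous fun p : E × E => homothety p.2 r p.1 := by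
  simp only [homothety_apply, vsub_eq_sub, vadd_eq_add]
  fun_prop

variable [MeasurableSpace E] [BorelSpace E] [FiniteDimensional ℝ E]

lemma measurableEmbedding_homothety (c : E) {r : ℝ} (hr : r ≠ 0) :
    MeasurableEmbedding (homothety c r) :=
  (AffineEquiv.homothetyUnitsMulHom c (Units.mk0 r hr)).toContinuousAffineEquiv.toHomeomorph
    |>.measurableEmbedding

variable (μ : Measure E) [μ.IsAddHaarMeasure]

lemma map_homothety_addHaar (c : E) {r : ℝ} (hr : r ≠ 0) :
    μ.map (homothety c r) = ENNReal.ofReal (|r| ^ (-(finrank ℝ E : ℤ))) • μ := by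
  ext s hs
  rw [(measurableEmbedding_homothety c hr).map_apply, Measure.smul_apply, smul_eq_mul]
  change μ (AffineEquiv.homothetyUnitsMulHom c (Units.mk0 r hr) ⁻¹' s) = _
  rw [← AffineEquiv.image_symm, AffineEquiv.coe_homothetyUnitsMulHom_apply_symm,
    Measure.addHaar_image_homothety, Units.val_inv_eq_inv_val, Units.val_mk0, inv_pow, abs_inv,
    abs_pow, zpow_neg, zpow_natCast]

variable {μ}

lemma MeasureTheory.Measure.AbsolutelyContinuous.map_homothety {ν : Measure E} (h : ν ≪ μ)
    (c : E) {r : ℝ} (hr : r ≠ 0) : ν.map (homothety c r) ≪ μ := by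
  have := h.map (homothety_continuous c r).measurable
  rw [map_homothety_addHaar μ c hr] at this
  exact this.trans Measure.smul_absolutelyContinuous

lemma map_restrict_homothety_le {ν : Measure E} {M : ℝ≥0∞} (h : ν ≤ M • μ) (c : E) {r : ℝ}
    (hr : r ≠ 0) (A : Set E) :
    (ν.restrict A).map (homothety c r) ≤
      (M * ENNReal.ofReal (|r| ^ (-(finrank ℝ E : ℤ)))) • μ.restrict (homothety c r '' A) := by
  have hemb := measurableEmbedding_homothety c hr
  calc (ν.restrict A).map (homothety c r) ≤ ((M • μ).restrict A).map (homothety c r) :=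
        Measure.map_mono (Measure.restrict_mono le_rfl h) hemb.measurable
    _ = M • (μ.map (homothety c r)).restrict (homothety c r '' A) := by
        rw [Measure.restrict_smul, Measure.map_smul, hemb.restrict_map,
          preimage_image_eq A hemb.injective]
    _ = _ := by
        rw [map_homothety_addHaar μ c hr, Measure.restrict_smul, smul_smul]

variable {π : Measure (E × E)} {S : Set E}

lemma absolutelyContinuous_map_homothety_of_countable (hS : S.Countable)
    (hπS : ∀ᵐ p ∂π, p.2 ∈ S) (hac : π.map Prod.fst ≪ μ) {r : ℝ} (hr : r ≠ 0) :
    π.map (fun p => homothety p.2 r p.1) ≪ μ := by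
  refine Measure.absolutelyContinuous_of_le (Measure.map_le_sum_map_restrict_sections hS hπS
    (G := univ) (ae_of_all _ fun _ => trivial) (continuous_homothety_swap r).measurable)
    |>.trans (Measure.absolutelyContinuous_sum_left fun y => ?_)
  exact (Measure.restrict_le_self.absolutelyContinuous.trans hac).map_homothety y hr

lemma map_homothety_le_smul_of_injOn (hS : S.Countable) (hπS : ∀ᵐ p ∂π, p.2 ∈ S)
    {G : Set (E × E)} (hG : MeasurableSet G) (hπG : ∀ᵐ p ∂π, p ∈ G) {r : ℝ} (hr : r ≠ 0)
    (hinj : InjOn (fun p => homothety p.2 r p.1) G) {M : ℝ≥0∞} (hM : π.map Prod.fst ≤ M • μ) :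
    π.map (fun p => homothety p.2 r p.1) ≤
      (M * ENNReal.ofReal (|r| ^ (-(finrank ℝ E : ℤ)))) • μ := by
  set k := M * ENNReal.ofReal (|r| ^ (-(finrank ℝ E : ℤ)))
  set B : E → Set E := fun y => homothety y r '' {x | (x, y) ∈ G}
  have hB (y : E) : MeasurableSet (B y) :=
    (measurableEmbedding_homothety y hr).measurableSet_image.mpr
      (hG.preimage measurable_prodMk_right)
  have hdisj : Pairwise fun y y' : S => Disjoint (B y) (B y') := fun y y' hne =>
    hinj.pairwise_disjoint_image_sections (Subtype.coe_ne_coe.mpr hne)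
  have : Countable S := hS.to_subtype
  refine (Measure.map_le_sum_map_restrict_sections hS hπS hπG
    (continuous_homothety_swap r).measurable).trans (Measure.le_iff.mpr fun s hs => ?_)
  rw [Measure.sum_apply _ hs]
  calc ∑' y : S, _ ≤ ∑' y : S, (k • μ.restrict (B y)) s :=
        ENNReal.tsum_le_tsum fun y => map_restrict_homothety_le hM y hr _ s
    _ = k * μ (⋃ y : S, s ∩ B y) := by
        simp only [Measure.smul_apply, smul_eq_mul, Measure.restrict_apply hs,
          ENNReal.tsum_mul_left]
        rw [measure_iUnion (fun y y' hne => (hdisj hne).mono inter_subset_right inter_subset_right)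
          fun y => hs.inter (hB y)]
    _ ≤ (k • μ) s := by
        rw [Measure.smul_apply, smul_eq_mul]
        gcongr
        exact iUnion_subset fun _ => inter_subset_left

end Homothety

lemma msupport_eq_support {α : Type*} [TopologicalSpace α] [MeasurableSpace α]
    (μ : Measure α) : msupport μ = μ.support := by
  ext x
  simp [msupport, Measure.mem_support_iff_forall, pos_iff_ne_zero]

lemma interpMap_zero {n : ℕ} : interpMap (n := n) 0 = Prod.fst := by
  ext1 p
  simp [interpMap]

lemma interpMap_eq_homothety {n : ℕ} (t : ℝ) :
    interpMap (n := n) t = fun p => AffineMap.homothety p.2 (1 - t) p.1 := by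
  ext1 p
  simp only [interpMap, AffineMap.homothety_apply, vsub_eq_sub, vadd_eq_add]
  module

theorem interpolation_absolutelyContinuous_general {n : ℕ} (Ω : Set (Eucl n)) (hconv : Convex ℝ Ω)
    (ρ : Eucl n → Eucl n → ℝ) (hmet : IsMetricOn Ω ρ) (hgeo : SegmentsAreGeodesics Ω ρ)
    (ε : ℝ) (hε : 0 < ε)
    (π : Measure (Eucl n × Eucl n)) [IsFiniteMeasure π]
    (Γ : Set (Eucl n × Eucl n)) (hΓΩ : Γ ⊆ Ω ×ˢ Ω)
    (hΓmono : CyclicallyMonotoneR (fun x y => ρ x y + ε * ‖x - y‖^2) Γ)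
    (hconc : π Γᶜ = 0)
    (hsupp : (msupport (π.map Prod.snd)).Finite)
    (hac : π.map Prod.fst ≪ volume) :
    ∀ t : ℝ, 0 ≤ t → t < 1 →
      (π.map (interpMap t) ≪ volume) ∧
      (essSup ((π.map Prod.fst).rnDeriv volume) volume < ⊤ →
        essSup ((π.map (interpMap t)).rnDeriv volume) volume ≤
          ENNReal.ofReal ((1-t) ^ (-(n:ℤ))) *
            essSup ((π.map Prod.fst).rnDeriv volume) volume) := by
  intro t ht₀ ht₁
  rcases ht₀.eq_or_lt with rfl | ht₀
  · simp [interpMap_zero, hac]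
  have ht₁' : 0 < 1 - t := sub_pos.mpr ht₁
  have hπS : ∀ᵐ p ∂π, p.2 ∈ msupport (π.map Prod.snd) := by
    rw [msupport_eq_support]
    exact ae_of_ae_map measurable_snd.aemeasurable Measure.support_mem_ae
  have hπG : ∀ᵐ p ∂π, p ∉ toMeasurable π Γᶜ :=
    measure_eq_zero_iff_ae_notMem.mp (by rw [measure_toMeasurable, hconc])
  have hinj := (injOn_interpMap hconv hmet hgeo hε hΓΩ hΓmono ht₀ ht₁).mono
    (compl_subset_comm.mp (subset_toMeasurable π Γᶜ))
  rw [interpMap_eq_homothety] at hinj ⊢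
  refine ⟨absolutelyContinuous_map_homothety_of_countable hsupp.countable hπS hac ht₁'.ne',
    fun _ => ?_⟩
  have hle := map_homothety_le_smul_of_injOn hsupp.countable hπS
    (measurableSet_toMeasurable π Γᶜ).compl hπG ht₁'.ne' hinj
    (Measure.le_essSup_rnDeriv_smul hac)
  rw [finrank_euclideanSpace_fin, abs_of_pos ht₁', mul_comm] at hle
  exact Measure.essSup_rnDeriv_le_of_le_smul hle

/-- Let `Ω ⊆ ℝⁿ` be convex and `ρ` a metric on `Ω` for which Euclidean
segments are geodesics; let `c_ε(x,y) = ρ(x,y) + ε|x-y|²`.  If a finite Borel measure `π` on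
`Ω²` is concentrated on a `c_ε`-cyclically monotone set, has finitely supported second
marginal and absolutely continuous first marginal, then `(P_t)♯π ≪ ℒⁿ` for every
`t ∈ [0, 1)`, and if the density of the first marginal is essentially bounded then the density
of `(P_t)♯π` is bounded by `(1-t)^{-n}` times the bound. -/
theorem interpolation_absolutelyContinuous {n : ℕ} (Ω : Set (Eucl n)) (hconv : Convex ℝ Ω)
    (ρ : Eucl n → Eucl n → ℝ) (hmet : IsMetricOn Ω ρ) (hgeo : SegmentsAreGeodesics Ω ρ)
    (ε : ℝ) (hε : 0 < ε)
    (π : Measure (Eucl n × Eucl n)) [IsFiniteMeasure π] (hπΩ : π ((Ω ×ˢ Ω)ᶜ) = 0)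
    (Γ : Set (Eucl n × Eucl n)) (hΓΩ : Γ ⊆ Ω ×ˢ Ω)
    (hΓmono : CyclicallyMonotoneR (fun x y => ρ x y + ε * ‖x - y‖^2) Γ)
    (hconc : π Γᶜ = 0)
    (hsupp : (msupport (π.map Prod.snd)).Finite)
    (hac : π.map Prod.fst ≪ volume) :
    ∀ t : ℝ, 0 ≤ t → t < 1 →
      (π.map (interpMap t) ≪ volume) ∧
      (essSup ((π.map Prod.fst).rnDeriv volume) volume < ⊤ →
        essSup ((π.map (interpMap t)).rnDeriv volume) volume ≤
          ENNReal.ofReal ((1-t) ^ (-(n:ℤ))) *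
            essSup ((π.map Prod.fst).rnDeriv volume) volume) :=
  interpolation_absolutelyContinuous_general Ω hconv ρ hmet hgeo ε hε π Γ hΓΩ hΓmono hconc hsupp hac
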